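/- (Theorem 2.1) For every x ∈ ℝ the following estimates hold: 1/√2 ≤ (v'(x)/v(x))·d₁(x) ≤ √2 and 1/√2 ≤ (|u'(x)|/u(x))·d₂(x) ≤ √2; furthermore (1/√2)·d₁(x)d₂(x)/(d₁(x)+d₂(x)) ≤ ρ(x) ≤ √2·d₁(x)d₂(x)/(d₁(x)+d₂(x)), and (1/4)·d(x) ≤ ρ(x) ≤ (3/2)·d(x), where ρ(x) = u(x)v(x). -/

import Mathlib

open MeasureTheory Filter Real Set
open scoped ENNReal

noncomputable section

/-- Condition (1.5): for every `a > 0`, `∫_{x-a}^{x+a} q(t) dt → ∞` as `|x| → ∞`. -/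
def Cond15 (q : ℝ → ℝ) : Prop :=
  ∀ a : ℝ, 0 < a → Tendsto (fun x => ∫ t in (x - a)..(x + a), q t) (cocompact ℝ) atTop

/-- `(u, v)` is a principal fundamental system of solutions (PFSS) of `z'' = q z`.
Local absolute continuity of `u'` together with `u'' = q u` a.e. is encoded via the
fundamental theorem of calculus: `u' b - u' a = ∫_a^b q t * u t dt` for all `a, b`. -/
def IsPFSS (q u v : ℝ → ℝ) : Prop :=
  ContDiff ℝ 1 u ∧ ContDiff ℝ 1 v ∧
  (∀ a b : ℝ, deriv u b - deriv u a = ∫ t in a..b, q t * u t) ∧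
  (∀ a b : ℝ, deriv v b - deriv v a = ∫ t in a..b, q t * v t) ∧
  (∀ x, 0 < u x) ∧ (∀ x, 0 < v x) ∧
  (∀ x, deriv u x < 0) ∧ (∀ x, 0 < deriv v x) ∧
  (∀ x, deriv v x * u x - deriv u x * v x = 1) ∧
  (∀ x, u x = v x * ∫ t in Set.Ioi x, ((v t) ^ 2)⁻¹) ∧
  Tendsto u atTop (nhds 0) ∧ Tendsto (deriv u) atTop (nhds 0) ∧
  Tendsto v atTop atTop ∧ Tendsto (deriv v) atTop atTop ∧
  Tendsto v atBot (nhds 0) ∧ Tendsto (deriv v) atBot (nhds 0) ∧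
  Tendsto u atBot atTop ∧ Tendsto (fun x => |deriv u x|) atBot atTop

/-- The Green function: `G(x,t) = u(x) v(t)` for `x ≥ t`, `G(x,t) = u(t) v(x)` for `x ≤ t`. -/
def GreenFn (u v : ℝ → ℝ) (x t : ℝ) : ℝ := if x ≤ t then u t * v x else u x * v t

/-- The Green operator `(Gf)(x) = ∫_ℝ G(x,t) f(t) dt`. -/
def GreenOp (u v f : ℝ → ℝ) (x : ℝ) : ℝ := ∫ t, GreenFn u v x t * f t

/-!
Write `Q(t) = ∫_{x-t}^x q` and `F(t) = ∫_0^t Q`; by Cauchy's formula for repeated integration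
`F(t) = ∫_{x-t}^x (t - (x - ξ)) q(ξ) dξ`. For the increasing solution `v`, integrating
`v'(x) - v'(x - s) = ∫_{x-s}^x q v ≤ v(x) Q(s)` over `s ∈ [0, t]` gives `t v'(x) ≤ v(x) (1 + F(t))`,
while bounding `v` below by its tangent line at `x` (it is convex) gives
`v(x) Q(t) ≤ v'(x) (1 + t Q(t) - F(t))`. At `t = √2 d₁(x)`, where `F = 1` and hence `t Q(t) ≥ 1`,
these are the two bounds on `v'/v`; the decreasing solution `u` is handled by the reflection
`x ↦ -x`. The Wronskian identity says `1/ρ = v'/v + |u'|/u`, which turns these bounds into the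
bounds on `ρ`, and the same two inequalities at `t = d(x)`, where `Q` on both sides add up to
`2 / d`, give `d/4 ≤ ρ ≤ 3d/2`.
-/

theorem integral_integral_eq_integral_sub_mul {g : ℝ → ℝ} {T : ℝ}
    (hg : IntervalIntegrable g volume 0 T) :
    ∫ s in 0..T, ∫ τ in 0..s, g τ = ∫ τ in 0..T, (T - τ) * g τ := by
  have hG := hg.absolutelyContinuousOnInterval_intervalIntegral left_mem_uIcc
  have hL : AbsolutelyContinuousOnInterval (fun s => s - T) 0 T :=
    (contDiff_id.sub contDiff_const).contDiffOn.absolutelyContinuousOnInterval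
  have hibp := hG.integral_mul_deriv_eq_deriv_mul hL
  simp only [deriv_sub_const, deriv_id'', mul_one, sub_self, mul_zero,
    intervalIntegral.integral_same, zero_mul, zero_sub] at hibp
  rw [hibp, ← intervalIntegral.integral_neg]
  refine intervalIntegral.integral_congr_ae ?_
  filter_upwards [hg.ae_hasDerivAt_integral] with τ hτ hmem
  rw [(hτ (uIoc_subset_uIcc hmem) 0 left_mem_uIcc).deriv]
  ring

section IteratedIntegral

variable {p : ℝ → ℝ} {x : ℝ}

theorem integral_sub_left_eq_integral_comp (s : ℝ) :
    ∫ ξ in x - s..x, p ξ = ∫ τ in 0..s, p (x - τ) := by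
  rw [intervalIntegral.integral_comp_sub_left p x, sub_zero]

theorem intervalIntegrable_comp_sub_left (hp : ∀ a b, IntervalIntegrable p volume a b) (a b : ℝ) :
    IntervalIntegrable (fun τ => p (x - τ)) volume a b := by
  simpa using (hp (x - a) (x - b)).comp_sub_left x

theorem continuous_integral_sub_left (hp : ∀ a b, IntervalIntegrable p volume a b) :
    Continuous fun s => ∫ ξ in x - s..x, p ξ := by
  simp only [integral_sub_left_eq_integral_comp]
  exact intervalIntegral.continuous_primitive (intervalIntegrable_comp_sub_left hp) 0

theorem integral_integral_sub_left_eq (hp : ∀ a b, IntervalIntegrable p volume a b) (t : ℝ) :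
    ∫ s in 0..t, ∫ ξ in x - s..x, p ξ = ∫ ξ in x - t..x, (t - (x - ξ)) * p ξ := by
  simp only [integral_sub_left_eq_integral_comp]
  rw [integral_integral_eq_integral_sub_mul (intervalIntegrable_comp_sub_left hp 0 t)]
  simp only [sub_sub_cancel]

theorem integral_integral_sub_left_nonneg (hp : ∀ a b, IntervalIntegrable p volume a b)
    (hp0 : ∀ y, 0 ≤ p y) {t : ℝ} (ht : 0 ≤ t) :
    0 ≤ ∫ s in 0..t, ∫ ξ in x - s..x, p ξ := by
  rw [integral_integral_sub_left_eq hp]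
  refine intervalIntegral.integral_nonneg (by linarith) fun ξ hξ => ?_
  exact mul_nonneg (by linarith [hξ.1]) (hp0 ξ)

theorem integral_integral_sub_left_le (hp : ∀ a b, IntervalIntegrable p volume a b)
    (hp0 : ∀ y, 0 ≤ p y) {t : ℝ} (ht : 0 ≤ t) :
    ∫ s in 0..t, ∫ ξ in x - s..x, p ξ ≤ t * ∫ ξ in x - t..x, p ξ := by
  rw [integral_integral_sub_left_eq hp, ← intervalIntegral.integral_const_mul]
  refine intervalIntegral.integral_mono_on (by linarith)
    ((hp _ _).continuousOn_mul (by fun_prop)) ((hp _ _).const_mul t) fun ξ hξ => ?_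
  exact mul_le_mul_of_nonneg_right (by linarith [hξ.2]) (hp0 ξ)

theorem integral_comp_neg_sub_left (s : ℝ) :
    ∫ ξ in -x - s..-x, p (-ξ) = ∫ ξ in x..x + s, p ξ := by
  rw [intervalIntegral.integral_comp_neg p]
  congr 1 <;> ring

theorem intervalIntegrable_comp_neg (hp : ∀ a b, IntervalIntegrable p volume a b) (a b : ℝ) :
    IntervalIntegrable (fun y => p (-y)) volume a b := by
  simpa using (IntervalIntegrable.iff_comp_neg (by simp)).mp (hp (-a) (-b))

theorem integral_integral_add_right_nonneg (hp : ∀ a b, IntervalIntegrable p volume a b)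
    (hp0 : ∀ y, 0 ≤ p y) {t : ℝ} (ht : 0 ≤ t) :
    0 ≤ ∫ s in 0..t, ∫ ξ in x..x + s, p ξ := by
  simpa only [integral_comp_neg_sub_left] using
    integral_integral_sub_left_nonneg (x := -x) (intervalIntegrable_comp_neg hp)
      (fun y => hp0 (-y)) ht

theorem integral_integral_add_right_le (hp : ∀ a b, IntervalIntegrable p volume a b)
    (hp0 : ∀ y, 0 ≤ p y) {t : ℝ} (ht : 0 ≤ t) :
    ∫ s in 0..t, ∫ ξ in x..x + s, p ξ ≤ t * ∫ ξ in x..x + t, p ξ := by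
  simpa only [integral_comp_neg_sub_left] using
    integral_integral_sub_left_le (x := -x) (intervalIntegrable_comp_neg hp)
      (fun y => hp0 (-y)) ht

end IteratedIntegral

theorem deriv_comp_neg_nonneg {w : ℝ → ℝ} (hw' : ∀ y, deriv w y ≤ 0) (y : ℝ) :
    0 ≤ deriv (fun y => w (-y)) y := by
  rw [deriv_comp_neg]
  linarith [hw' (-y)]

structure IsPositiveSolution (p w : ℝ → ℝ) : Prop where
  intervalIntegrable : ∀ a b, IntervalIntegrable p volume a b
  nonneg : ∀ y, 0 ≤ p y
  contDiff : ContDiff ℝ 1 w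
  pos : ∀ y, 0 < w y
  deriv_sub_deriv : ∀ a b, deriv w b - deriv w a = ∫ t in a..b, p t * w t

namespace IsPositiveSolution

variable {p w : ℝ → ℝ} {x t : ℝ}

theorem comp_neg (hw : IsPositiveSolution p w) :
    IsPositiveSolution (fun y => p (-y)) (fun y => w (-y)) where
  intervalIntegrable := intervalIntegrable_comp_neg hw.intervalIntegrable
  nonneg y := hw.nonneg (-y)
  contDiff := hw.contDiff.comp contDiff_neg
  pos y := hw.pos (-y)
  deriv_sub_deriv a b := by
    simp only [deriv_comp_neg]
    rw [intervalIntegral.integral_comp_neg (fun t => p t * w t)]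
    linarith [hw.deriv_sub_deriv (-b) (-a)]

theorem monotone_deriv (hw : IsPositiveSolution p w) : Monotone (deriv w) := fun a b hab => by
  have : 0 ≤ ∫ t in a..b, p t * w t :=
    intervalIntegral.integral_nonneg hab fun t _ => mul_nonneg (hw.nonneg t) (hw.pos t).le
  linarith [hw.deriv_sub_deriv a b]

theorem sub_mul_deriv_le (hw : IsPositiveSolution p w) {σ : ℝ} (hσ : σ ≤ x) :
    w x - (x - σ) * deriv w x ≤ w σ := by
  have hcont := hw.contDiff.continuous_deriv le_rfl
  have hftc : ∫ t in σ..x, deriv w t = w x - w σ :=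
    intervalIntegral.integral_deriv_eq_sub (fun t _ => hw.contDiff.differentiable one_ne_zero t)
      (hcont.intervalIntegrable σ x)
  have hle : ∫ t in σ..x, deriv w t ≤ ∫ _ in σ..x, deriv w x :=
    intervalIntegral.integral_mono_on hσ (hcont.intervalIntegrable σ x) intervalIntegrable_const
      fun t ht => hw.monotone_deriv ht.2
  rw [hftc, intervalIntegral.integral_const, smul_eq_mul] at hle
  linarith

theorem mul_deriv_le_of_deriv_nonneg (hw : IsPositiveSolution p w)
    (hw' : ∀ y, 0 ≤ deriv w y) (ht : 0 ≤ t) :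
    t * deriv w x ≤ w x * (1 + ∫ s in 0..t, ∫ ξ in x - s..x, p ξ) := by
  have hwd := hw.contDiff.differentiable one_ne_zero
  have hcont := hw.contDiff.continuous_deriv le_rfl
  have hQ := continuous_integral_sub_left (x := x) hw.intervalIntegrable
  have hpointwise : ∀ s ∈ Icc 0 t,
      deriv w x - w x * ∫ ξ in x - s..x, p ξ ≤ deriv w (x - s) := by
    intro s hs
    have hle : ∫ ξ in x - s..x, p ξ * w ξ ≤ ∫ ξ in x - s..x, p ξ * w x :=
      intervalIntegral.integral_mono_on (by linarith [hs.1])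
        ((hw.intervalIntegrable _ _).mul_continuousOn hw.contDiff.continuous.continuousOn)
        ((hw.intervalIntegrable _ _).mul_const _)
        fun ξ hξ => mul_le_mul_of_nonneg_left (monotone_of_deriv_nonneg hwd hw' hξ.2) (hw.nonneg ξ)
    rw [intervalIntegral.integral_mul_const] at hle
    linarith [hw.deriv_sub_deriv (x - s) x]
  have hF : t * deriv w x - w x * ∫ s in 0..t, ∫ ξ in x - s..x, p ξ ≤ w x - w (x - t) :=
    calc t * deriv w x - w x * ∫ s in 0..t, ∫ ξ in x - s..x, p ξ
        = ∫ s in 0..t, (deriv w x - w x * ∫ ξ in x - s..x, p ξ) := by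
          rw [intervalIntegral.integral_sub intervalIntegrable_const
              ((hQ.intervalIntegrable 0 t).const_mul (w x)),
            intervalIntegral.integral_const, intervalIntegral.integral_const_mul, smul_eq_mul,
            sub_zero]
      _ ≤ ∫ s in 0..t, deriv w (x - s) :=
          intervalIntegral.integral_mono_on ht
            ((continuous_const.sub (continuous_const.mul hQ)).intervalIntegrable 0 t)
            ((hcont.comp (continuous_const.sub continuous_id)).intervalIntegrable 0 t) hpointwise
      _ = w x - w (x - t) := by
          rw [intervalIntegral.integral_comp_sub_left (deriv w) x, sub_zero,
            intervalIntegral.integral_deriv_eq_sub (fun y _ => hwd y)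
              (hcont.intervalIntegrable _ _)]
  linarith [hw.pos (x - t)]

theorem mul_integral_le_of_deriv_nonneg (hw : IsPositiveSolution p w)
    (hw' : ∀ y, 0 ≤ deriv w y) (ht : 0 ≤ t) :
    w x * ∫ ξ in x - t..x, p ξ ≤
      deriv w x * (1 + t * (∫ ξ in x - t..x, p ξ) - ∫ s in 0..t, ∫ ξ in x - s..x, p ξ) := by
  have htangent : ∫ ξ in x - t..x, p ξ * (w x - (x - ξ) * deriv w x) ≤
      ∫ ξ in x - t..x, p ξ * w ξ :=
    intervalIntegral.integral_mono_on (by linarith)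
      ((hw.intervalIntegrable _ _).mul_continuousOn (by fun_prop))
      ((hw.intervalIntegrable _ _).mul_continuousOn hw.contDiff.continuous.continuousOn)
      fun ξ hξ => mul_le_mul_of_nonneg_left (hw.sub_mul_deriv_le hξ.2) (hw.nonneg ξ)
  have hsplit : (fun ξ => p ξ * (w x - (x - ξ) * deriv w x)) =
      fun ξ => (w x - t * deriv w x) * p ξ + deriv w x * ((t - (x - ξ)) * p ξ) := by
    funext ξ; ring
  rw [hsplit, intervalIntegral.integral_add ((hw.intervalIntegrable _ _).const_mul _)
      (((hw.intervalIntegrable _ _).continuousOn_mul (by fun_prop)).const_mul _),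
    intervalIntegral.integral_const_mul, intervalIntegral.integral_const_mul,
    ← integral_integral_sub_left_eq hw.intervalIntegrable, ← hw.deriv_sub_deriv] at htangent
  linarith [hw' (x - t)]

theorem le_mul_deriv_of_deriv_nonneg (hw : IsPositiveSolution p w)
    (hw' : ∀ y, 0 ≤ deriv w y) (ht : 0 ≤ t)
    (hF : ∫ s in 0..t, ∫ ξ in x - s..x, p ξ = 1) :
    w x ≤ t * deriv w x := by
  have hlow := hw.mul_integral_le_of_deriv_nonneg hw' (x := x) ht
  have hQ := integral_integral_sub_left_le hw.intervalIntegrable hw.nonneg (x := x) ht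
  rw [hF] at hlow hQ
  have hQpos : 0 < ∫ ξ in x - t..x, p ξ := pos_of_mul_pos_right (by linarith) ht
  exact le_of_mul_le_mul_right (by linarith) hQpos

theorem mul_neg_deriv_le_of_deriv_nonpos (hw : IsPositiveSolution p w)
    (hw' : ∀ y, deriv w y ≤ 0) (ht : 0 ≤ t) :
    t * -deriv w x ≤ w x * (1 + ∫ s in 0..t, ∫ ξ in x..x + s, p ξ) := by
  simpa only [deriv_comp_neg, neg_neg, integral_comp_neg_sub_left] using
    hw.comp_neg.mul_deriv_le_of_deriv_nonneg (x := -x) (deriv_comp_neg_nonneg hw') ht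

theorem mul_integral_le_of_deriv_nonpos (hw : IsPositiveSolution p w)
    (hw' : ∀ y, deriv w y ≤ 0) (ht : 0 ≤ t) :
    w x * ∫ ξ in x..x + t, p ξ ≤
      -deriv w x * (1 + t * (∫ ξ in x..x + t, p ξ) - ∫ s in 0..t, ∫ ξ in x..x + s, p ξ) := by
  simpa only [deriv_comp_neg, neg_neg, integral_comp_neg_sub_left] using
    hw.comp_neg.mul_integral_le_of_deriv_nonneg (x := -x) (deriv_comp_neg_nonneg hw') ht

theorem le_mul_neg_deriv_of_deriv_nonpos (hw : IsPositiveSolution p w)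
    (hw' : ∀ y, deriv w y ≤ 0) (ht : 0 ≤ t)
    (hF : ∫ s in 0..t, ∫ ξ in x..x + s, p ξ = 1) :
    w x ≤ t * -deriv w x := by
  simpa only [deriv_comp_neg, neg_neg] using
    hw.comp_neg.le_mul_deriv_of_deriv_nonneg (x := -x) (deriv_comp_neg_nonneg hw') ht
      (by simpa only [integral_comp_neg_sub_left] using hF)

end IsPositiveSolution

section Algebra

variable {u v u' v' : ℝ}

theorem sqrt_two_bounds_of_le_of_le {h : ℝ} (hv : 0 < v) (hlow : v ≤ √2 * h * v')
    (hup : √2 * h * v' ≤ v * (1 + 1)) :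
    1 / √2 ≤ v' / v * h ∧ v' / v * h ≤ √2 := by
  have hs : √2 * √2 * (h * v') = 2 * (h * v') := by rw [Real.mul_self_sqrt zero_le_two]
  rw [div_mul_eq_mul_div, div_le_div_iff₀ (by positivity) hv, div_le_iff₀ hv]
  constructor
  · linarith
  · nlinarith [mul_le_mul_of_nonneg_left hup (Real.sqrt_nonneg 2)]

theorem harmonic_sqrt_two_bounds {d₁ d₂ : ℝ} (hu : 0 < u) (hv : 0 < v) (hd₁ : 0 < d₁)
    (hd₂ : 0 < d₂) (hW : v' * u + u' * v = 1)
    (hv₁ : v ≤ √2 * d₁ * v') (hv₂ : √2 * d₁ * v' ≤ v * (1 + 1))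
    (hu₁ : u ≤ √2 * d₂ * u') (hu₂ : √2 * d₂ * u' ≤ u * (1 + 1)) :
    1 / √2 * (d₁ * d₂ / (d₁ + d₂)) ≤ u * v ∧ u * v ≤ √2 * (d₁ * d₂ / (d₁ + d₂)) := by
  have hW' : √2 * (d₁ * d₂) = √2 * d₁ * d₂ * (v' * u + u' * v) := by rw [hW]; ring
  have hs : √2 * √2 * (d₁ * d₂) = 2 * (d₁ * d₂) := by rw [Real.mul_self_sqrt zero_le_two]
  have hlow : √2 * (d₁ * d₂) ≤ 2 * (u * v * (d₁ + d₂)) := by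
    rw [hW']
    linarith [mul_le_mul_of_nonneg_right hv₂ (mul_nonneg hd₂.le hu.le),
      mul_le_mul_of_nonneg_right hu₂ (mul_nonneg hd₁.le hv.le)]
  have hup : u * v * (d₁ + d₂) ≤ √2 * (d₁ * d₂) := by
    rw [hW']
    linarith [mul_le_mul_of_nonneg_right hv₁ (mul_nonneg hd₂.le hu.le),
      mul_le_mul_of_nonneg_right hu₁ (mul_nonneg hd₁.le hv.le)]
  rw [div_mul_div_comm, div_le_iff₀ (by positivity), ← mul_div_assoc, le_div_iff₀ (by positivity)]
  constructor
  · nlinarith [mul_le_mul_of_nonneg_left hlow (Real.sqrt_nonneg 2)]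
  · linarith

variable {d Q₁ Q₂ F₁ F₂ : ℝ}

theorem quarter_le_mul (hu : 0 < u) (hv : 0 < v) (hW : v' * u + u' * v = 1)
    (hQ : d * (Q₁ + Q₂) = 2) (hF₁ : F₁ ≤ d * Q₁) (hF₂ : F₂ ≤ d * Q₂)
    (hv' : d * v' ≤ v * (1 + F₁)) (hu' : d * u' ≤ u * (1 + F₂)) :
    1 / 4 * d ≤ u * v := by
  have hW' : d * (v' * u + u' * v) = d := by rw [hW, mul_one]
  have hQ' : u * v * (d * (Q₁ + Q₂)) = u * v * 2 := by rw [hQ]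
  nlinarith [mul_le_mul_of_nonneg_right hv' hu.le, mul_le_mul_of_nonneg_right hu' hv.le,
    mul_le_mul_of_nonneg_left hF₁ (mul_pos hu hv).le,
    mul_le_mul_of_nonneg_left hF₂ (mul_pos hu hv).le]

theorem mul_le_three_halves (hu : 0 < u) (hv : 0 < v) (hu' : 0 ≤ u') (hv' : 0 ≤ v')
    (hd : 0 ≤ d) (hQ₁ : 0 ≤ Q₁) (hQ₂ : 0 ≤ Q₂) (hF₁ : 0 ≤ F₁) (hF₂ : 0 ≤ F₂)
    (hW : v' * u + u' * v = 1) (hQ : d * (Q₁ + Q₂) = 2)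
    (hvQ : v * Q₁ ≤ v' * (1 + d * Q₁ - F₁)) (huQ : u * Q₂ ≤ u' * (1 + d * Q₂ - F₂)) :
    u * v ≤ 3 / 2 * d := by
  obtain ⟨α, hα⟩ : ∃ α, α = d * Q₁ := ⟨_, rfl⟩
  obtain ⟨β, hβ⟩ : ∃ β, β = d * Q₂ := ⟨_, rfl⟩
  have hα0 : 0 ≤ α := hα ▸ mul_nonneg hd hQ₁
  have hβ0 : 0 ≤ β := hβ ▸ mul_nonneg hd hQ₂
  have hαβ : α + β = 2 := by rw [hα, hβ, ← mul_add, hQ]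
  rw [← hα] at hvQ
  rw [← hβ] at huQ
  have hv₁ : v * Q₁ ≤ v' * (1 + α) := hvQ.trans (by nlinarith)
  have hu₁ : u * Q₂ ≤ u' * (1 + β) := huQ.trans (by nlinarith)
  have hW' : (v' * u + u' * v) * ((1 + α) * (1 + β)) = (1 + α) * (1 + β) := by rw [hW, one_mul]
  have hsum : u * v * (Q₁ * (1 + β) + Q₂ * (1 + α)) ≤ (1 + α) * (1 + β) := by
    nlinarith [mul_le_mul_of_nonneg_right hv₁ (mul_nonneg hu.le (by positivity : 0 ≤ 1 + β)),
      mul_le_mul_of_nonneg_right hu₁ (mul_nonneg hv.le (by positivity : 0 ≤ 1 + α))]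
  have hsum' : u * v * (α * (1 + β) + β * (1 + α)) ≤ d * ((1 + α) * (1 + β)) := by
    have := mul_le_mul_of_nonneg_left hsum hd
    subst hα hβ
    linarith
  -- since `α + β = 2`, `hsum'` reads `u v (2 + 2αβ) ≤ d (3 + αβ) ≤ 3/2 · d (2 + 2αβ)`
  nlinarith [mul_nonneg hα0 hβ0, mul_nonneg hd (mul_nonneg hα0 hβ0)]

end Algebra

theorem theorem_2_1 (q u v : ℝ → ℝ) (hq_loc : LocallyIntegrable q) (hq : ∀ x, 1 ≤ q x)
    (huv : IsPFSS q u v) (d d₁ d₂ : ℝ → ℝ)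
    (hd : ∀ x, 0 < d x ∧ (2 : ℝ) = d x * ∫ t in (x - d x)..(x + d x), q t)
    (hd₁ : ∀ x, 0 < d₁ x ∧
      (1 : ℝ) = ∫ t in (0 : ℝ)..(Real.sqrt 2 * d₁ x), ∫ ξ in (x - t)..x, q ξ)
    (hd₂ : ∀ x, 0 < d₂ x ∧
      (1 : ℝ) = ∫ t in (0 : ℝ)..(Real.sqrt 2 * d₂ x), ∫ ξ in x..(x + t), q ξ)
    (x : ℝ) :
    (1 / Real.sqrt 2 ≤ deriv v x / v x * d₁ x ∧ deriv v x / v x * d₁ x ≤ Real.sqrt 2) ∧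
    (1 / Real.sqrt 2 ≤ |deriv u x| / u x * d₂ x ∧ |deriv u x| / u x * d₂ x ≤ Real.sqrt 2) ∧
    (1 / Real.sqrt 2 * (d₁ x * d₂ x / (d₁ x + d₂ x)) ≤ u x * v x ∧
      u x * v x ≤ Real.sqrt 2 * (d₁ x * d₂ x / (d₁ x + d₂ x))) ∧
    ((1 / 4) * d x ≤ u x * v x ∧ u x * v x ≤ (3 / 2) * d x) := by
  obtain ⟨hu, hv, hu'', hv'', hu0, hv0, hu', hv', hW, -⟩ := huv
  have hqi : ∀ a b, IntervalIntegrable q volume a b := fun a b =>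
    (hq_loc.integrableOn_isCompact isCompact_uIcc).intervalIntegrable
  have hq0 : ∀ y, 0 ≤ q y := fun y => zero_le_one.trans (hq y)
  have hV : IsPositiveSolution q v := ⟨hqi, hq0, hv, hv0, hv''⟩
  have hU : IsPositiveSolution q u := ⟨hqi, hq0, hu, hu0, hu''⟩
  have hv'0 : ∀ y, 0 ≤ deriv v y := fun y => (hv' y).le
  have hu'0 : ∀ y, deriv u y ≤ 0 := fun y => (hu' y).le
  obtain ⟨hd0, hdx⟩ := hd x
  obtain ⟨hd₁0, hd₁x⟩ := hd₁ x
  obtain ⟨hd₂0, hd₂x⟩ := hd₂ x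
  have hv₁ := hV.le_mul_deriv_of_deriv_nonneg hv'0 (by positivity) hd₁x.symm
  have hu₁ := hU.le_mul_neg_deriv_of_deriv_nonpos hu'0 (by positivity) hd₂x.symm
  have hv₂ := hV.mul_deriv_le_of_deriv_nonneg hv'0 (x := x) (by positivity : 0 ≤ √2 * d₁ x)
  have hu₂ := hU.mul_neg_deriv_le_of_deriv_nonpos hu'0 (x := x) (by positivity : 0 ≤ √2 * d₂ x)
  rw [← hd₁x] at hv₂
  rw [← hd₂x] at hu₂
  have hW' : deriv v x * u x + -deriv u x * v x = 1 := by linarith [hW x]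
  have hQ : d x * ((∫ ξ in x - d x..x, q ξ) + ∫ ξ in x..x + d x, q ξ) = 2 := by
    rw [intervalIntegral.integral_add_adjacent_intervals (hqi _ _) (hqi _ _), hdx]
  rw [abs_of_neg (hu' x)]
  refine ⟨sqrt_two_bounds_of_le_of_le (hv0 x) hv₁ hv₂, sqrt_two_bounds_of_le_of_le (hu0 x) hu₁ hu₂,
    harmonic_sqrt_two_bounds (hu0 x) (hv0 x) hd₁0 hd₂0 hW' hv₁ hv₂ hu₁ hu₂,
    quarter_le_mul (hu0 x) (hv0 x) hW' hQ (integral_integral_sub_left_le hqi hq0 hd0.le)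
      (integral_integral_add_right_le hqi hq0 hd0.le)
      (hV.mul_deriv_le_of_deriv_nonneg hv'0 hd0.le)
      (hU.mul_neg_deriv_le_of_deriv_nonpos hu'0 hd0.le),
    mul_le_three_halves (hu0 x) (hv0 x) (by linarith [hu' x]) (hv'0 x) hd0.le
      (intervalIntegral.integral_nonneg (by linarith) fun y _ => hq0 y)
      (intervalIntegral.integral_nonneg (by linarith) fun y _ => hq0 y)
      (integral_integral_sub_left_nonneg hqi hq0 hd0.le)
      (integral_integral_add_right_nonneg hqi hq0 hd0.le) hW' hQ
      (hV.mul_integral_le_of_deriv_nonneg hv'0 hd0.le)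
      (hU.mul_integral_le_of_deriv_nonpos hu'0 hd0.le)⟩
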